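/- Let τ ∈ (0,1] and let N ≥ 2 be an integer. Define F_N(x) := Σ_{k=0}^{N-2} ((τ/2)^k/k!) H_k(x)². Then for all real x, F_N'(x) = (4τx/(1+τ)) F_N(x) - (4(τ/2)^{N-1}/(1+τ)) · H_{N-2}(x) H_{N-1}(x)/(N-2)!. -/

import Mathlib

/-!
Differentiating termwise with H'_{k+1} = 2(k+1) H_k turns the derivative of
Σ_{k ≤ M} a^k/k! H_k² into 4 Σ_{k < M} a^{k+1}/k! H_{k+1} H_k. Multiplying this cross sum by
1 + 2a and inducting on M, the three-term recurrence cancels everything except 2ax times the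
original sum and the last cross term a^{M+1} H_M H_{M+1}/M!; this is a Christoffel–Darboux
identity. With a = τ/2 one divides by 1 + τ.
-/

open Real

/-- Physicists' Hermite polynomials: H₀ = 1, H₁ = 2x, H_{n+2} = 2x H_{n+1} - 2(n+1) H_n. -/
noncomputable def Hp : ℕ → ℝ → ℝ
  | 0 => fun _ => 1
  | 1 => fun x => 2*x
  | n+2 => fun x => 2*x*Hp (n+1) x - 2*(n+1)*Hp n x

open Finset Nat

lemma Hp_add_two (n : ℕ) (x : ℝ) : Hp (n + 2) x = 2 * x * Hp (n + 1) x - 2 * (n + 1) * Hp n x :=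
  rfl

lemma hasDerivAt_Hp_succ (n : ℕ) (x : ℝ) : HasDerivAt (Hp (n + 1)) (2 * (n + 1) * Hp n x) x := by
  induction n using Nat.twoStepInduction generalizing x with
  | zero => simpa [Hp] using (hasDerivAt_id x).const_mul (2 : ℝ)
  | one =>
    have h2 := (hasDerivAt_id' x).const_mul (2 : ℝ)
    rw [show Hp (1 + 1) = fun y => 2 * y * (2 * y) - 2 from funext fun y => by norm_num [Hp]]
    refine ((h2.fun_mul h2).sub_const 2).congr_deriv ?_
    rw [show Hp 1 x = 2 * x from rfl]; push_cast; ring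
  | more n ih₁ ih₂ =>
    have h := (((hasDerivAt_id' x).const_mul (2 : ℝ)).fun_mul (ih₂ x)).fun_sub
      ((ih₁ x).const_mul (2 * (((n + 1 : ℕ) : ℝ) + 1)))
    rw [show Hp (n + 2 + 1) = _ from funext fun y => Hp_add_two (n + 1) y]
    refine h.congr_deriv ?_
    push_cast
    linear_combination (-2 * ((n : ℝ) + 2)) * Hp_add_two n x

lemma hasDerivAt_sum_Hp_sq (a x : ℝ) (M : ℕ) :
    HasDerivAt (fun y => ∑ k ∈ range (M + 1), a ^ k / k ! * Hp k y ^ 2)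
      (4 * ∑ k ∈ range M, a ^ (k + 1) / k ! * (Hp (k + 1) x * Hp k x)) x := by
  induction M with
  | zero => simpa [Hp] using hasDerivAt_const x (1 : ℝ)
  | succ M ih =>
    simp_rw [sum_range_succ _ (M + 1)]
    refine (ih.fun_add (((hasDerivAt_Hp_succ M x).fun_pow 2).const_mul _)).congr_deriv ?_
    rw [sum_range_succ, factorial_succ]
    push_cast
    field_simp
    ring

lemma christoffel_darboux_Hp (a x : ℝ) (M : ℕ) :
    (1 + 2 * a) * ∑ k ∈ range M, a ^ (k + 1) / k ! * (Hp (k + 1) x * Hp k x) =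
      2 * a * x * ∑ k ∈ range (M + 1), a ^ k / k ! * Hp k x ^ 2
        - a ^ (M + 1) * (Hp M x * Hp (M + 1) x) / M ! := by
  induction M with
  | zero =>
    simp only [range_zero, sum_empty, mul_zero, zero_add, range_one, sum_singleton, Hp]
    ring
  | succ M ih =>
    rw [sum_range_succ, mul_add, ih, sum_range_succ _ (M + 1), Hp_add_two, factorial_succ]
    push_cast
    field_simp
    ring

theorem hermite_CD_identity (τ : ℝ) (hτ : τ ∈ Set.Ioc (0:ℝ) 1) (N : ℕ) (hN : 2 ≤ N) (x : ℝ) :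
    deriv (fun y : ℝ =>
        ∑ k ∈ Finset.range (N-1), ((τ/2)^k / (Nat.factorial k : ℝ)) * (Hp k y)^2) x
      = (4*τ*x/(1+τ)) *
          (∑ k ∈ Finset.range (N-1), ((τ/2)^k / (Nat.factorial k : ℝ)) * (Hp k x)^2)
        - (4*(τ/2)^(N-1)/(1+τ)) * (Hp (N-2) x * Hp (N-1) x / (Nat.factorial (N-2) : ℝ)) := by
  obtain ⟨M, rfl⟩ : ∃ M, N = M + 2 := ⟨N - 2, by omega⟩
  simp only [show M + 2 - 1 = M + 1 from rfl, show M + 2 - 2 = M from rfl]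
  rw [(hasDerivAt_sum_Hp_sq (τ / 2) x M).deriv]
  have hτ₁ : 1 + τ ≠ 0 := by linarith [hτ.1]
  have hcd := christoffel_darboux_Hp (τ / 2) x M
  rw [show 1 + 2 * (τ / 2) = 1 + τ by ring] at hcd
  rw [div_mul_eq_mul_div, div_mul_eq_mul_div, ← sub_div, eq_div_iff hτ₁]
  linear_combination 4 * hcd
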